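/- arXiv:2108.11934 — 5 statements merged into one kernel-verified Lean document; each statement's English description precedes it below -/
import Mathlib

section
/- Let g : ℂ → ℝ be a continuous compactly supported function and let Ψ(z) = log |z|² (with value -∞ at 0). Then the limit as t → -∞ of the integral of g(z)·e^{-Ψ(z)} = g(z)/|z|² over the annulus {z ∈ ℂ : t < log |z|² < t+1} (with respect to Lebesgue measure on ℂ ≅ ℝ²) exists and equals π · g(0). -/
/-!
With respect to the weight `|z|⁻²`, every annulus `a < |z|² < b` has mass `π log (b / a)`
(in polar coordinates the weight is `2π dr / r`), so each annulus `e^t < |z|² < e^(t+1)` has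
mass `π`. As `t → -∞` these annuli shrink to `0`, so the weighted integrals of the continuous
function `g` are `π` times averages of `g` over sets concentrating at `0`.
-/

open MeasureTheory Filter Set
open scoped Topology

theorem tendsto_setIntegral_mul_of_tendsto_smallSets {α ι : Type*} [TopologicalSpace α]
    [MeasurableSpace α] {μ : Measure α} {l : Filter ι} {S : ι → Set α} {w g : α → ℝ} {x₀ : α}
    {c : ℝ} (hS : Tendsto S l (𝓝 x₀).smallSets) (hSm : ∀ i, MeasurableSet (S i))
    (hw : ∀ x, 0 ≤ w x) (hwint : ∀ i, IntegrableOn w (S i) μ)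
    (hmass : ∀ i, ∫ x in S i, w x ∂μ = c) (hgm : AEStronglyMeasurable g μ)
    (hg : ContinuousAt g x₀) :
    Tendsto (fun i => ∫ x in S i, g x * w x ∂μ) l (𝓝 (c * g x₀)) := by
  refine Metric.tendsto_nhds.2 fun ε hε => ?_
  obtain ⟨δ, hδ, hδc⟩ := exists_pos_mul_lt hε c
  filter_upwards [tendsto_smallSets_iff.1 hS _ (hg (Metric.ball_mem_nhds _ hδ))] with i hi
  have hnear : ∀ᵐ x ∂μ.restrict (S i), ‖g x - g x₀‖ ≤ δ :=
    ae_restrict_of_forall_mem (hSm i) fun x hx => (hi hx).le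
  have hint : IntegrableOn (fun x => (g x - g x₀) * w x) (S i) μ :=
    (hwint i).bdd_mul (hgm.sub aestronglyMeasurable_const).restrict hnear
  have hsplit : ∫ x in S i, g x * w x ∂μ = ∫ x in S i, (g x - g x₀) * w x ∂μ + c * g x₀ := by
    rw [← hmass i, ← integral_mul_const, ← integral_add hint ((hwint i).mul_const _)]
    congr 1 with x
    ring
  calc dist (∫ x in S i, g x * w x ∂μ) (c * g x₀)
      = ‖∫ x in S i, (g x - g x₀) * w x ∂μ‖ := by rw [hsplit, dist_add_self_left]
    _ ≤ ∫ x in S i, δ * w x ∂μ := by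
        refine norm_integral_le_of_norm_le ((hwint i).const_mul δ) ?_
        filter_upwards [hnear] with x hx
        rw [norm_mul, Real.norm_of_nonneg (hw x)]
        exact mul_le_mul_of_nonneg_right hx (hw x)
    _ = c * δ := by rw [integral_const_mul, hmass i, mul_comm]
    _ < ε := hδc

theorem Complex.integral_comp_norm {E : Type*} [NormedAddCommGroup E] [NormedSpace ℝ E]
    (f : ℝ → E) : ∫ z : ℂ, f ‖z‖ = (2 * Real.pi) • ∫ r in Ioi (0 : ℝ), r • f r := by
  rw [integral_fun_norm_addHaar volume f, Complex.finrank_real_complex, measureReal_def,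
    Complex.volume_ball, ← Nat.cast_smul_eq_nsmul ℝ, smul_smul]
  simp

def normSqAnnulus (a b : ℝ) : Set ℂ := {z | a < Complex.normSq z ∧ Complex.normSq z < b}

theorem measurableSet_normSqAnnulus (a b : ℝ) : MeasurableSet (normSqAnnulus a b) :=
  (measurableSet_lt measurable_const Complex.continuous_normSq.measurable).inter
    (measurableSet_lt Complex.continuous_normSq.measurable measurable_const)

theorem normSqAnnulus_eq_preimage_norm {a : ℝ} (ha : 0 ≤ a) (b : ℝ) :
    normSqAnnulus a b = (‖·‖) ⁻¹' Ioo √a √b := by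
  ext z
  simp only [normSqAnnulus, mem_ofPred_eq, mem_preimage, mem_Ioo, ← Complex.sq_norm]
  rw [Real.sqrt_lt ha (norm_nonneg z), Real.lt_sqrt (norm_nonneg z)]

theorem tendsto_normSqAnnulus_smallSets {ι : Type*} {l : Filter ι} {a b : ι → ℝ}
    (hb : Tendsto b l (𝓝 0)) :
    Tendsto (fun i => normSqAnnulus (a i) (b i)) l (𝓝 0).smallSets := by
  refine tendsto_smallSets_iff.2 fun u hu => ?_
  obtain ⟨ε, hε, hball⟩ := Metric.mem_nhds_iff.1 hu
  filter_upwards [hb.eventually (gt_mem_nhds (pow_pos hε 2))] with i hi z hz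
  refine hball (mem_ball_zero_iff.2 (lt_of_pow_lt_pow_left₀ 2 hε.le ?_))
  rw [Complex.sq_norm]
  exact hz.2.trans hi

theorem integral_inv_normSq_normSqAnnulus {a b : ℝ} (ha : 0 < a) (hab : a ≤ b) :
    ∫ z in normSqAnnulus a b, (Complex.normSq z)⁻¹ = Real.pi * Real.log (b / a) := by
  have hsa : 0 < √a := Real.sqrt_pos.2 ha
  calc ∫ z in normSqAnnulus a b, (Complex.normSq z)⁻¹
      = ∫ z : ℂ, (Ioo √a √b).indicator (fun r => (r ^ 2)⁻¹) ‖z‖ := by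
        rw [normSqAnnulus_eq_preimage_norm ha.le,
          ← integral_indicator (measurableSet_Ioo.preimage continuous_norm.measurable)]
        simp_rw [← Complex.sq_norm]
        congr 1 with z
    _ = 2 * Real.pi * ∫ r in Ioo √a √b, r⁻¹ := by
        have hsub : Ioo √a √b ⊆ Ioi 0 := fun r hr => hsa.trans hr.1
        have hpt (r : ℝ) : r • (Ioo √a √b).indicator (fun r => (r ^ 2)⁻¹) r =
            (Ioo √a √b).indicator (fun r => r⁻¹) r := by
          by_cases hr : r ∈ Ioo √a √b
          · have := (hsa.trans hr.1).ne'
            simp only [indicator_of_mem hr, smul_eq_mul]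
            field_simp
          · simp [hr]
        rw [Complex.integral_comp_norm, smul_eq_mul]
        simp_rw [hpt]
        rw [integral_indicator measurableSet_Ioo, Measure.restrict_restrict measurableSet_Ioo,
          inter_eq_left.2 hsub]
    _ = Real.pi * Real.log (b / a) := by
        rw [← integral_Ioc_eq_integral_Ioo, ← intervalIntegral.integral_of_le
          (Real.sqrt_le_sqrt hab), integral_inv_of_pos hsa (hsa.trans_le (Real.sqrt_le_sqrt hab)),
          ← Real.sqrt_div (ha.le.trans hab), Real.log_sqrt (div_nonneg (ha.le.trans hab) ha.le)]
        ring

theorem integral_inv_normSq_normSqAnnulus_exp (t : ℝ) :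
    ∫ z in normSqAnnulus (Real.exp t) (Real.exp (t + 1)), (Complex.normSq z)⁻¹ = Real.pi := by
  rw [integral_inv_normSq_normSqAnnulus (Real.exp_pos t) (Real.exp_le_exp.2 (by linarith)),
    ← Real.exp_sub, add_sub_cancel_left, Real.log_exp, mul_one]

theorem stmt0_general (g : ℂ → ℝ) (hg : Continuous g) :
    Tendsto
      (fun t : ℝ =>
        ∫ z in {z : ℂ | Real.exp t < Complex.normSq z ∧ Complex.normSq z < Real.exp (t + 1)},
          g z / Complex.normSq z)
      atBot (𝓝 (Real.pi * g 0)) := by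
  have hmass := integral_inv_normSq_normSqAnnulus_exp
  have hshrink : Tendsto (fun t => Real.exp (t + 1)) atBot (𝓝 0) :=
    Real.tendsto_exp_atBot.comp (tendsto_atBot_add_const_right _ 1 tendsto_id)
  simp_rw [div_eq_mul_inv]
  exact tendsto_setIntegral_mul_of_tendsto_smallSets (tendsto_normSqAnnulus_smallSets hshrink)
    (fun _ => measurableSet_normSqAnnulus _ _) (fun z => inv_nonneg.2 (Complex.normSq_nonneg z))
    (fun t => Integrable.of_integral_ne_zero ((hmass t).trans_ne Real.pi_ne_zero)) hmass
    hg.aestronglyMeasurable hg.continuousAt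

/-- The Ohsawa measure of the model log canonical pair `(ℂ, log |z|²)` at its
non-klt locus `{0}`: the limit of the annulus integrals equals `π · g 0`. -/
theorem stmt0 (g : ℂ → ℝ) (hg : Continuous g) (hsupp : HasCompactSupport g) :
    Tendsto
      (fun t : ℝ =>
        ∫ z in {z : ℂ | Real.exp t < Complex.normSq z ∧ Complex.normSq z < Real.exp (t + 1)},
          g z / Complex.normSq z)
      atBot (𝓝 (Real.pi * g 0)) :=
  stmt0_general g hg
end

section
/- Fix k ≥ 1 and let Ψ(z) = k·log(|z₁|² + ⋯ + |z_k|²) on ℂ^k. For every continuous compactly supported g : ℂ^k → ℝ, the limit as t → -∞ of ∫_{t < Ψ(z) < t+1} g(z)·e^{-Ψ(z)} dλ(z) exists and equals (π^k / (k·(k-1)!)) · g(0), where λ is Lebesgue measure on ℂ^k ≅ ℝ^{2k}. -/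
/-!
In real coordinates `ℂᵏ ≅ ℝ²ᵏ` the weight is `|x|^(-2k)`, which is invariant under dilations, so in
polar coordinates the shell `a < |x| < b` carries mass `2k · vol(B) · log (b / a)`. The shells
`e^(t/k) < |x|² < e^((t+1)/k)` all have the same ratio of radii, hence the same mass
`πᵏ / (k · (k-1)!)`, and they shrink to the origin as `t → -∞`. The normalised weights are
therefore peak functions at `0`, and the integrals of `g` against them tend to `g 0`.
-/

open MeasureTheory Filter Metric Set
open scoped Topology

theorem tendsto_setIntegral_smul_of_tendsto_smallSets {α ι E : Type*} [MeasurableSpace α]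
    [TopologicalSpace α] [BorelSpace α] {μ : Measure α} [IsLocallyFiniteMeasure μ]
    [NormedAddCommGroup E] [NormedSpace ℝ E] [CompleteSpace E] {l : Filter ι}
    {S : ι → Set α} {w : α → ℝ} {g : α → E} {x₀ : α} {C : ℝ} (hC : 0 < C)
    (hS : ∀ i, MeasurableSet (S i)) (hSx : Tendsto S l (𝓝 x₀).smallSets)
    (hw : 0 ≤ w) (hwm : AEStronglyMeasurable w μ)
    (hmass : ∀ᶠ i in l, ∫ x in S i, w x ∂μ = C)
    (hg : Integrable g μ) (hgx : ContinuousAt g x₀) :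
    Tendsto (fun i => ∫ x in S i, w x • g x ∂μ) l (𝓝 (C • g x₀)) := by
  obtain ⟨U, hUx, hUμ⟩ := μ.finiteAt_nhds x₀
  have hU : toMeasurable μ U ∈ 𝓝 x₀ := mem_of_superset hUx (subset_toMeasurable μ U)
  have hpeak : Tendsto (fun i => ∫ x, (S i).indicator (fun x => C⁻¹ * w x) x • g x ∂μ) l
      (𝓝 (g x₀)) := by
    refine tendsto_integral_peak_smul_of_integrable_of_tendsto (measurableSet_toMeasurable μ U)
      hU (by rwa [measure_toMeasurable, ← lt_top_iff_ne_top])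
      (Eventually.of_forall fun i => indicator_nonneg fun x _ => mul_nonneg (by positivity) (hw x))
      (fun u hu hxu => ?_) ?_ (Eventually.of_forall fun i => (hwm.const_mul _).indicator (hS i))
      hg hgx
    · refine (tendsto_const_nhds (x := (0 : ℝ))).tendstoUniformlyOn_const uᶜ |>.congr ?_
      filter_upwards [tendsto_smallSets_iff.1 hSx u (hu.mem_nhds hxu)] with i hi x hx
      exact (indicator_of_notMem (fun h => hx (hi h)) _).symm
    · refine tendsto_const_nhds.congr' ?_
      filter_upwards [hmass, tendsto_smallSets_iff.1 hSx _ hU] with i hi hiU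
      rw [setIntegral_indicator (hS i), inter_eq_right.2 hiU, integral_const_mul, hi,
        inv_mul_cancel₀ hC.ne']
  have hpeak_eq : ∀ i, ∫ x, (S i).indicator (fun x => C⁻¹ * w x) x • g x ∂μ
      = C⁻¹ • ∫ x in S i, w x • g x ∂μ := fun i => by
    simp_rw [← indicator_smul_apply_left, integral_indicator (hS i), mul_smul, integral_smul]
  simpa [hpeak_eq, smul_smul, mul_inv_cancel₀ hC.ne'] using hpeak.const_smul C

theorem setIntegral_inv_norm_pow_finrank_shell {E : Type*} [NormedAddCommGroup E]
    [NormedSpace ℝ E] [FiniteDimensional ℝ E] [Nontrivial E] [MeasurableSpace E] [BorelSpace E]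
    (μ : Measure E) [μ.IsAddHaarMeasure] {a b : ℝ} (ha : 0 < a) (hab : a ≤ b) :
    ∫ x in norm ⁻¹' Ioo a b, (‖x‖ ^ Module.finrank ℝ E)⁻¹ ∂μ
      = Module.finrank ℝ E * μ.real (ball 0 1) * Real.log (b / a) := by
  set n := Module.finrank ℝ E
  have hn : n ≠ 0 := Module.finrank_pos.ne'
  have hradial : ∫ x in norm ⁻¹' Ioo a b, (‖x‖ ^ n)⁻¹ ∂μ
      = ∫ x, (Ioo a b).indicator (fun r => (r ^ n)⁻¹) ‖x‖ ∂μ := by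
    rw [← integral_indicator (measurableSet_Ioo.preimage measurable_norm)]
    simp_rw [← indicator_comp_right]
    rfl
  rw [hradial, integral_fun_norm_addHaar, nsmul_eq_mul, smul_eq_mul, mul_assoc]
  congr 2
  calc ∫ r in Ioi 0, r ^ (n - 1) • (Ioo a b).indicator (fun r => (r ^ n)⁻¹) r
      = ∫ r in Ioi 0, (Ioo a b).indicator (fun r => r⁻¹) r := by
        refine setIntegral_congr_fun measurableSet_Ioi fun r (hr : 0 < r) => ?_
        simp only [indicator, smul_eq_mul]
        split_ifs
        · rw [← pow_sub_one_mul hn r]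
          field_simp
        · rw [mul_zero]
    _ = ∫ r in a..b, r⁻¹ := by
        rw [setIntegral_indicator measurableSet_Ioo,
          inter_eq_right.2 (Ioo_subset_Ioi_self.trans (Ioi_subset_Ioi ha.le)), intervalIntegral.integral_of_le hab,
          integral_Ioc_eq_integral_Ioo]
    _ = Real.log (b / a) := integral_inv_of_pos ha (ha.trans_le hab)

noncomputable def euclideanEquivComplexPi (k : ℕ) :
    EuclideanSpace ℝ (Fin k ⊕ Fin k) ≃ᵐ (Fin k → ℂ) :=
  (MeasurableEquiv.toLp 2 ((Fin k ⊕ Fin k) → ℝ)).symm.trans <|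
    (MeasurableEquiv.sumPiEquivProdPi fun _ : Fin k ⊕ Fin k => ℝ).trans <|
      (MeasurableEquiv.arrowProdEquivProdArrow ℝ ℝ (Fin k)).symm.trans <|
        MeasurableEquiv.piCongrRight fun _ => Complex.measurableEquivRealProd.symm

theorem euclideanEquivComplexPi_apply (k : ℕ) (x : EuclideanSpace ℝ (Fin k ⊕ Fin k))
    (i : Fin k) : euclideanEquivComplexPi k x i = ⟨x (Sum.inl i), x (Sum.inr i)⟩ := rfl

theorem measurePreserving_euclideanEquivComplexPi (k : ℕ) :
    MeasurePreserving (euclideanEquivComplexPi k) :=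
  ((volume_preserving_pi fun _ => Complex.volume_preserving_equiv_real_prod.symm).comp
    (volume_measurePreserving_arrowProdEquivProdArrow ℝ ℝ (Fin k)).symm).comp
      ((volume_measurePreserving_sumPiEquivProdPi _).comp
        (EuclideanSpace.volume_preserving_symm_measurableEquiv_toLp _))

theorem sum_normSq_euclideanEquivComplexPi (k : ℕ) (x : EuclideanSpace ℝ (Fin k ⊕ Fin k)) :
    ∑ i, Complex.normSq (euclideanEquivComplexPi k x i) = ‖x‖ ^ 2 := by
  rw [EuclideanSpace.norm_sq_eq, Fintype.sum_sum_type, ← Finset.sum_add_distrib]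
  simp [euclideanEquivComplexPi_apply, Complex.normSq_mk, sq]

theorem finrank_euclideanSpace_sum_self (k : ℕ) :
    Module.finrank ℝ (EuclideanSpace ℝ (Fin k ⊕ Fin k)) = 2 * k := by
  simp [two_mul]

theorem setIntegral_inv_sum_normSq_pow_shell {k : ℕ} (hk : k ≠ 0) {a b : ℝ} (ha : 0 < a)
    (hab : a ≤ b) :
    ∫ z in (fun z : Fin k → ℂ => ∑ i, Complex.normSq (z i)) ⁻¹' Ioo a b,
        ((∑ i, Complex.normSq (z i)) ^ k)⁻¹
      = Real.pi ^ k / (k - 1).factorial * Real.log (b / a) := by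
  have : Nonempty (Fin k) := ⟨⟨0, Nat.pos_of_ne_zero hk⟩⟩
  have hpre : euclideanEquivComplexPi k ⁻¹'
      ((fun z : Fin k → ℂ => ∑ i, Complex.normSq (z i)) ⁻¹' Ioo a b) = norm ⁻¹' Ioo √a √b := by
    ext x
    simp only [mem_preimage, sum_normSq_euclideanEquivComplexPi, mem_Ioo]
    rw [Real.sqrt_lt ha.le (norm_nonneg x), Real.lt_sqrt (norm_nonneg x)]
  rw [← (measurePreserving_euclideanEquivComplexPi k).setIntegral_preimage_emb
    (euclideanEquivComplexPi k).measurableEmbedding, hpre]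
  simp_rw [sum_normSq_euclideanEquivComplexPi, ← pow_mul, ← finrank_euclideanSpace_sum_self k]
  rw [setIntegral_inv_norm_pow_finrank_shell _ (Real.sqrt_pos.2 ha) (Real.sqrt_le_sqrt hab),
    measureReal_def, InnerProductSpace.volume_ball_of_dim_even (finrank_euclideanSpace_sum_self k),
    finrank_euclideanSpace_sum_self, ENNReal.ofReal_one, one_pow, one_mul,
    ENNReal.toReal_ofReal (by positivity), ← Real.sqrt_div' b ha.le,
    Real.log_sqrt (div_nonneg (ha.le.trans hab) ha.le), ← Nat.mul_factorial_pred hk]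
  push_cast
  field_simp

theorem sq_norm_le_sum_normSq {ι : Type*} [Fintype ι] (z : ι → ℂ) :
    ‖z‖ ^ 2 ≤ ∑ i, Complex.normSq (z i) := by
  have hsum : 0 ≤ ∑ i, Complex.normSq (z i) :=
    Finset.sum_nonneg fun i _ => Complex.normSq_nonneg _
  refine (Real.le_sqrt (norm_nonneg z) hsum).1 <|
    (pi_norm_le_iff_of_nonneg (Real.sqrt_nonneg _)).2 fun i =>
      (Real.le_sqrt (norm_nonneg _) hsum).2 ?_
  rw [Complex.sq_norm]
  exact Finset.single_le_sum (fun j _ => Complex.normSq_nonneg (z j)) (Finset.mem_univ i)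

theorem tendsto_preimage_sum_normSq_Iio_smallSets {ι ι' : Type*} [Fintype ι] {l : Filter ι'}
    {r : ι' → ℝ} (hr : Tendsto r l (𝓝 0)) :
    Tendsto (fun j => (fun z : ι → ℂ => ∑ i, Complex.normSq (z i)) ⁻¹' Iio (r j)) l
      (𝓝 0).smallSets := by
  refine nhds_basis_ball.smallSets.tendsto_right_iff.2 fun ε hε => ?_
  filter_upwards [hr.eventually_lt_const (pow_pos hε 2)] with j hj z hz
  rw [mem_ball_zero_iff]
  exact lt_of_pow_lt_pow_left₀ 2 hε.le ((sq_norm_le_sum_normSq z).trans_lt (hz.trans hj))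

/-- The Ohsawa measure of the pair `(ℂᵏ, k·log(|z₁|²+⋯+|z_k|²))` on the point `{0}`:
the limit of the shell integrals equals `(πᵏ/(k·(k-1)!)) · g 0`. -/
theorem stmt1 (k : ℕ) (hk : 1 ≤ k) (g : (Fin k → ℂ) → ℝ) (hg : Continuous g)
    (hsupp : HasCompactSupport g) :
    Tendsto
      (fun t : ℝ =>
        ∫ z in {z : Fin k → ℂ |
            Real.exp (t / k) < ∑ i, Complex.normSq (z i) ∧
            (∑ i, Complex.normSq (z i)) < Real.exp ((t + 1) / k)},
          g z * (∑ i, Complex.normSq (z i)) ^ (-(k : ℤ)))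
      atBot (𝓝 (Real.pi ^ k / ((k : ℝ) * (Nat.factorial (k - 1) : ℝ)) * g 0)) := by
  have hkpos : (0 : ℝ) < k := by exact_mod_cast hk
  set N : (Fin k → ℂ) → ℝ := fun z => ∑ i, Complex.normSq (z i)
  have hN : Measurable N := by fun_prop
  have hshells : Tendsto (fun t : ℝ => N ⁻¹' Ioo (Real.exp (t / k)) (Real.exp ((t + 1) / k)))
      atBot (𝓝 0).smallSets :=
    (tendsto_preimage_sum_normSq_Iio_smallSets (Real.tendsto_exp_atBot.comp
      ((tendsto_atBot_add_const_right _ 1 tendsto_id).atBot_div_const hkpos))).smallSets_mono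
      (Eventually.of_forall fun t => preimage_mono Ioo_subset_Iio_self)
  have hmass (t : ℝ) :
      ∫ z in N ⁻¹' Ioo (Real.exp (t / k)) (Real.exp ((t + 1) / k)), (N z ^ k)⁻¹
        = Real.pi ^ k / (k * (k - 1).factorial) := by
    rw [setIntegral_inv_sum_normSq_pow_shell (by omega) (Real.exp_pos _)
      (Real.exp_le_exp.2 (by gcongr; linarith)), ← Real.exp_sub, Real.log_exp]
    field_simp
    ring
  simp only [zpow_neg, zpow_natCast, mul_comm (g _)]
  exact tendsto_setIntegral_smul_of_tendsto_smallSets (w := fun z => (N z ^ k)⁻¹)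
    (by positivity) (fun t => hN measurableSet_Ioo) hshells
    (fun z => inv_nonneg.2 (pow_nonneg (Finset.sum_nonneg fun i _ => Complex.normSq_nonneg _) k))
    (hN.pow_const k).inv.aestronglyMeasurable (Eventually.of_forall hmass)
    (hg.integrable_of_hasCompactSupport hsupp) hg.continuousAt
end

section
/- Let Ψ(x, y) = log|x|² + log|y|² on ℂ². Let g : ℂ² → ℝ be a continuous, compactly supported, nonnegative function with g(0,0) > 0. Then lim_{t → -∞} ∫_{t < Ψ < t+1} g(x,y) e^{-Ψ(x,y)} dλ(x,y) = +∞ (in particular, no finite limit exists for such g). -/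
/-!
Near the origin `g ≥ c > 0`. Writing `A a = {e^a < |x| < e^(a + 1/4)}`, every product
`A a × A (t/2 - a)` lies in the band `{t < Ψ < t + 1}`, and the density `|x|⁻² |y|⁻²` gives it
mass `(π/2)²` because `∫_{A a} |x|⁻² dλ = 2π · 1/4` whatever `a` is. For `a` running through a
grid of step `1/4` these products are disjoint, and about `-2t` of them stay inside the ball
where `g ≥ c`, so the integral over the band is at least a constant times `-t`.
-/

open MeasureTheory Filter Set Metric Module
open scoped Topology

theorem setIntegral_annulus_inv_norm_pow_finrank {E : Type*} [NormedAddCommGroup E]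
    [NormedSpace ℝ E] [FiniteDimensional ℝ E] [Nontrivial E] [MeasurableSpace E] [BorelSpace E]
    (μ : Measure E) [μ.IsAddHaarMeasure] {s r : ℝ} (hs : 0 < s) (hsr : s ≤ r) :
    ∫ x in ball 0 r \ closedBall 0 s, (‖x‖ ^ finrank ℝ E)⁻¹ ∂μ
      = finrank ℝ E * μ.real (ball 0 1) * Real.log (r / s) := by
  set φ : ℝ → ℝ := (Ioo s r).indicator fun y => (y ^ finrank ℝ E)⁻¹
  have hshell : ball (0 : E) r \ closedBall 0 s = (‖·‖) ⁻¹' Ioo s r := by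
    ext x; simp [and_comm]
  have hpow : ∀ y ∈ Ioi (0 : ℝ),
      y ^ (finrank ℝ E - 1) • φ y = (Ioo s r).indicator (·⁻¹) y := by
    intro y hy
    by_cases hyI : y ∈ Ioo s r
    · simp only [φ, indicator_of_mem hyI, smul_eq_mul]
      rw [← pow_sub_one_mul (finrank_pos (R := ℝ) (M := E)).ne' y, mul_inv, ← mul_assoc,
        mul_inv_cancel₀ (pow_ne_zero _ (ne_of_gt hy)), one_mul]
    · simp [φ, hyI]
  rw [hshell, ← integral_indicator (measurableSet_Ioo.preimage continuous_norm.measurable)]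
  refine (integral_fun_norm_addHaar μ φ).trans ?_
  rw [setIntegral_congr_fun measurableSet_Ioi hpow, setIntegral_indicator measurableSet_Ioo,
    Ioi_inter_Ioo, max_eq_right hs.le, ← integral_Ioc_eq_integral_Ioo,
    ← intervalIntegral.integral_of_le hsr, integral_inv_of_pos hs (hs.trans_le hsr),
    nsmul_eq_mul, smul_eq_mul, mul_assoc]

theorem HasCompactSupport.integrableOn_div_of_le {X : Type*} [TopologicalSpace X]
    [MeasurableSpace X] [OpensMeasurableSpace X] {μ : Measure X} [IsFiniteMeasureOnCompacts μ]
    {g q : X → ℝ} (hg : Continuous g) (hsupp : HasCompactSupport g) (hq : Measurable q)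
    {s : Set X} (hs : MeasurableSet s) {c : ℝ} (hc : 0 < c) (hqs : ∀ x ∈ s, c ≤ q x) :
    IntegrableOn (fun x => g x / q x) s μ := by
  refine (hg.integrable_of_hasCompactSupport hsupp).integrableOn.mul_bdd (c := c⁻¹)
    hq.inv.aestronglyMeasurable (ae_restrict_of_forall_mem hs fun x hx => ?_)
  have hqx : 0 < q x := hc.trans_le (hqs x hx)
  rw [norm_inv, Real.norm_of_nonneg hqx.le]
  exact inv_anti₀ hc (hqs x hx)

theorem card_mul_le_setIntegral_of_pairwiseDisjoint {α ι : Type*} [MeasurableSpace α]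
    {μ : Measure α} {f : α → ℝ} {s : Set α} {t : ι → Set α} {I : Finset ι} {A : ℝ}
    (hf : IntegrableOn f s μ) (hf0 : 0 ≤ᵐ[μ.restrict s] f) (hts : ∀ i ∈ I, t i ⊆ s)
    (ht : ∀ i ∈ I, MeasurableSet (t i)) (hdisj : (I : Set ι).PairwiseDisjoint t)
    (hA : ∀ i ∈ I, A ≤ ∫ x in t i, f x ∂μ) :
    I.card * A ≤ ∫ x in s, f x ∂μ :=
  calc I.card * A = ∑ _i ∈ I, A := by rw [Finset.sum_const, nsmul_eq_mul]
    _ ≤ ∑ i ∈ I, ∫ x in t i, f x ∂μ := Finset.sum_le_sum hA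
    _ = ∫ x in ⋃ i ∈ I, t i, f x ∂μ :=
      (integral_biUnion_finset I ht hdisj fun i hi => hf.mono_set (hts i hi)).symm
    _ ≤ ∫ x in s, f x ∂μ :=
      setIntegral_mono_set hf hf0 (Eventually.of_forall (iUnion₂_subset hts))

open Real
open Complex (normSq normSq_eq_norm_sq normSq_nonneg)

def logShell (a : ℝ) : Set ℂ := ball 0 (exp (a + 1/4)) \ closedBall 0 (exp a)

lemma mem_logShell {a : ℝ} {x : ℂ} :
    x ∈ logShell a ↔ exp a < ‖x‖ ∧ ‖x‖ < exp (a + 1/4) := by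
  simp [logShell, and_comm]

lemma measurableSet_logShell (a : ℝ) : MeasurableSet (logShell a) :=
  measurableSet_ball.diff measurableSet_closedBall

lemma setIntegral_logShell_inv_normSq (a : ℝ) :
    ∫ x in logShell a, (normSq x)⁻¹ = π / 2 := by
  have h := setIntegral_annulus_inv_norm_pow_finrank (volume : Measure ℂ) (exp_pos a)
    (exp_le_exp.mpr (le_add_of_nonneg_right (by norm_num : (0 : ℝ) ≤ 1/4)))
  simp only [Complex.finrank_real_complex, ← normSq_eq_norm_sq] at h
  rw [logShell, h, measureReal_def, Complex.volume_ball, ← exp_sub, log_exp]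
  simp only [Nat.cast_ofNat, ENNReal.ofReal_one, one_pow, one_mul, ENNReal.coe_toReal,
    NNReal.coe_real_pi, add_sub_cancel_left]
  ring

lemma pairwise_disjoint_logShell (a : ℝ) :
    Pairwise (Function.onFun Disjoint fun k : ℕ => logShell (a - k / 4)) := by
  refine (pairwise_disjoint_on _).mpr fun i j hij => disjoint_left.mpr fun x hi hj => ?_
  have hij' : (i : ℝ) + 1 ≤ j := by exact_mod_cast hij
  have := (mem_logShell.mp hi).1.trans (mem_logShell.mp hj).2
  rw [exp_lt_exp] at this
  linarith

lemma logShell_subset_ball {a ε : ℝ} (hε : 0 < ε) (ha : a ≤ log ε - 1/4) :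
    logShell a ⊆ ball 0 ε :=
  sdiff_subset.trans (ball_subset_ball ((exp_le_exp.mpr (by linarith)).trans_eq (exp_log hε)))

/-- The band `{t < Ψ < t + 1}` for `Ψ(x, y) = log |x|² + log |y|²`. -/
def psiBand (t : ℝ) : Set (ℂ × ℂ) :=
  {p | exp t < normSq p.1 * normSq p.2 ∧ normSq p.1 * normSq p.2 < exp (t + 1)}

lemma logShell_prod_subset_psiBand (a t : ℝ) :
    logShell a ×ˢ logShell (t / 2 - a) ⊆ psiBand t := by
  rintro ⟨x, y⟩ ⟨hx, hy⟩
  obtain ⟨hx₁, hx₂⟩ := mem_logShell.mp hx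
  obtain ⟨hy₁, hy₂⟩ := mem_logShell.mp hy
  have hlo : exp (t / 2) < ‖x‖ * ‖y‖ := by
    calc exp (t / 2) = exp a * exp (t / 2 - a) := by rw [← exp_add]; ring_nf
      _ < ‖x‖ * ‖y‖ := mul_lt_mul'' hx₁ hy₁ (exp_pos _).le (exp_pos _).le
  have hhi : ‖x‖ * ‖y‖ < exp ((t + 1) / 2) := by
    calc ‖x‖ * ‖y‖ < exp (a + 1/4) * exp (t / 2 - a + 1/4) :=
          mul_lt_mul'' hx₂ hy₂ (norm_nonneg _) (norm_nonneg _)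
      _ = exp ((t + 1) / 2) := by rw [← exp_add]; ring_nf
  have hsq : ∀ u, exp u = exp (u / 2) ^ 2 := fun u => by rw [← exp_nat_mul]; ring_nf
  simp only [psiBand, mem_ofPred_eq, normSq_eq_norm_sq, ← mul_pow]
  rw [hsq t, hsq (t + 1)]
  exact ⟨pow_lt_pow_left₀ hlo (exp_pos _).le two_ne_zero,
    pow_lt_pow_left₀ hhi (by positivity) two_ne_zero⟩

lemma measurableSet_psiBand (t : ℝ) : MeasurableSet (psiBand t) := by
  have hq : Measurable fun p : ℂ × ℂ => normSq p.1 * normSq p.2 := by fun_prop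
  exact (measurableSet_lt measurable_const hq).inter (measurableSet_lt hq measurable_const)

lemma mul_le_setIntegral_logShell_prod {g : ℂ × ℂ → ℝ} {a b c : ℝ}
    (hg : IntegrableOn (fun p => g p / (normSq p.1 * normSq p.2)) (logShell a ×ˢ logShell b))
    (hc : ∀ p ∈ logShell a ×ˢ logShell b, c ≤ g p) :
    c * (π / 2) ^ 2 ≤ ∫ p in logShell a ×ˢ logShell b, g p / (normSq p.1 * normSq p.2) := by
  have hint : ∀ a', IntegrableOn (fun x => (normSq x)⁻¹) (logShell a') :=
    fun _ => Integrable.of_integral_ne_zero (by simp [setIntegral_logShell_inv_normSq, pi_ne_zero])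
  have hbox : ∫ p in logShell a ×ˢ logShell b, c * (normSq p.1)⁻¹ * (normSq p.2)⁻¹
      = c * (π / 2) ^ 2 := by
    rw [Measure.volume_eq_prod]
    refine (setIntegral_prod_mul (fun x => c * (normSq x)⁻¹) (fun y => (normSq y)⁻¹) _ _).trans
      ?_
    rw [integral_const_mul, setIntegral_logShell_inv_normSq, setIntegral_logShell_inv_normSq]
    ring
  rw [← hbox]
  refine setIntegral_mono_on ?_ hg ((measurableSet_logShell a).prod (measurableSet_logShell b))
    fun p hp => ?_
  · rw [IntegrableOn, Measure.volume_eq_prod, ← Measure.prod_restrict]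
    exact ((hint a).const_mul c).mul_prod (hint b)
  · have hpos : ∀ {a} {x : ℂ}, x ∈ logShell a → 0 < normSq x := fun hx =>
      Complex.normSq_pos.mpr (norm_pos_iff.mp ((exp_pos _).trans (mem_logShell.mp hx).1))
    rw [mul_assoc, ← mul_inv, ← div_eq_mul_inv]
    exact div_le_div_of_nonneg_right (hc p hp) (mul_pos (hpos hp.1) (hpos hp.2)).le

lemma floor_mul_le_setIntegral_psiBand {g : ℂ × ℂ → ℝ} (hg : Continuous g)
    (hsupp : HasCompactSupport g) (hpos : ∀ p, 0 ≤ g p) {c ε : ℝ} (hε : 0 < ε)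
    (hc : ∀ p ∈ ball (0 : ℂ × ℂ) ε, c ≤ g p) (t : ℝ) :
    ⌊8 * (log ε - 1/4) - 2 * t⌋₊ * (c * (π / 2) ^ 2)
      ≤ ∫ p in psiBand t, g p / (normSq p.1 * normSq p.2) := by
  set m := log ε - 1/4 with hm
  set n := ⌊8 * m - 2 * t⌋₊
  have hint : IntegrableOn (fun p => g p / (normSq p.1 * normSq p.2)) (psiBand t) :=
    hsupp.integrableOn_div_of_le hg (by fun_prop) (measurableSet_psiBand t) (exp_pos t)
      fun p hp => hp.1.le
  have hbox : ∀ k ∈ Finset.range n,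
      logShell (m - k / 4) ×ˢ logShell (t / 2 - (m - k / 4)) ⊆ ball 0 ε := by
    intro k hk
    have hk : (k : ℝ) < 8 * m - 2 * t := Nat.lt_of_lt_floor (Finset.mem_range.mp hk)
    rw [← ball_prod_same]
    exact prod_mono (logShell_subset_ball hε (sub_le_self m (by positivity)))
      (logShell_subset_ball hε (by linarith [hm]))
  simpa using card_mul_le_setIntegral_of_pairwiseDisjoint (I := Finset.range n) hint
    (ae_of_all _ fun p => div_nonneg (hpos p) (mul_nonneg (normSq_nonneg _) (normSq_nonneg _)))
    (fun k _ => logShell_prod_subset_psiBand _ t)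
    (fun k _ => (measurableSet_logShell _).prod (measurableSet_logShell _))
    (fun i _ j _ hij => disjoint_prod.mpr (.inl (pairwise_disjoint_logShell m hij)))
    fun k hk => mul_le_setIntegral_logShell_prod
      (hint.mono_set (logShell_prod_subset_psiBand _ t)) fun p hp => hc p (hbox k hk hp)

/-- The Ohsawa measure is infinite near intersections of log canonical centers:
for `Ψ(x,y) = log|x|² + log|y|²` on `ℂ²` and `g ≥ 0` continuous with compact support
and `g(0,0) > 0`, the defining limits tend to `+∞`. -/
theorem stmt8 (g : ℂ × ℂ → ℝ) (hg : Continuous g) (hsupp : HasCompactSupport g)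
    (hpos : ∀ p, 0 ≤ g p) (h0 : 0 < g (0, 0)) :
    Tendsto
      (fun t : ℝ =>
        ∫ p in {p : ℂ × ℂ |
            Real.exp t < Complex.normSq p.1 * Complex.normSq p.2 ∧
            Complex.normSq p.1 * Complex.normSq p.2 < Real.exp (t + 1)},
          g p / (Complex.normSq p.1 * Complex.normSq p.2))
      atBot atTop := by
  obtain ⟨ε, hε, hball⟩ := Metric.eventually_nhds_iff_ball.mp
    (hg.continuousAt.eventually (lt_mem_nhds (half_lt_self h0)))
  have hcount : Tendsto (fun t : ℝ => ⌊8 * (log ε - 1/4) - 2 * t⌋₊) atBot atTop :=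
    tendsto_nat_floor_atTop.comp
      (tendsto_atBot_atTop.mpr fun b => ⟨(8 * (log ε - 1/4) - b) / 2, fun t ht => by linarith⟩)
  exact tendsto_atTop_mono
    (floor_mul_le_setIntegral_psiBand hg hsupp hpos hε fun p hp => (hball p hp).le)
    ((tendsto_natCast_atTop_atTop.comp hcount).atTop_mul_const
      (mul_pos (half_pos h0) (by positivity)))
end

section
/- Let Ψ(x, y) = log|x|² + log|y|² on ℂ². Let g : ℂ² → ℝ be a continuous compactly supported function whose support is disjoint from the y-axis {x = 0}. Then the limit as t → -∞ of ∫_{t < Ψ < t+1} g(x,y) e^{-Ψ(x,y)} dλ(x,y) exists and equals π ∫_ℂ g(x, 0) |x|^{-2} dλ(x). -/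
/-!
The substitution `y = e^{t/2} u` leaves the measure `dλ / (|x|²|y|²)` invariant and carries the
region `{t < Ψ < t + 1}` onto the fixed region `{0 < Ψ < 1}`, where the integrand becomes
`g(x, e^{t/2} u) / (|x|²|u|²)`. Since the support of `g` stays away from `{x = 0}`, on that
region the integrand is bounded and supported in a bounded set, so dominated convergence lets
`t → -∞` and replaces `g(x, e^{t/2} u)` by `g(x, 0)`. By Fubini, for fixed `x ≠ 0` the `u`-slice
is the annulus `1 < |x|²|u|² < e`, on which `∫ dλ(u) / |u|² = π log e = π`.
-/

open MeasureTheory Filter Set Module Real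
open scoped Topology

theorem integral_comp_smul_snd {E F G : Type*} [MeasurableSpace E]
    [NormedAddCommGroup F] [NormedSpace ℝ F] [FiniteDimensional ℝ F] [MeasurableSpace F]
    [BorelSpace F] [NormedAddCommGroup G] [NormedSpace ℝ G]
    (μ : Measure E) [SFinite μ] (ν : Measure F) [ν.IsAddHaarMeasure]
    (f : E × F → G) {c : ℝ} (hc : c ≠ 0) :
    ∫ p, f (p.1, c • p.2) ∂μ.prod ν = |(c ^ finrank ℝ F)⁻¹| • ∫ p, f p ∂μ.prod ν := by
  let e : E × F ≃ᵐ E × F := (MeasurableEquiv.refl E).prodCongr (MeasurableEquiv.smul₀ c hc)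
  have hmap : (μ.prod ν).map e = ENNReal.ofReal |(c ^ finrank ℝ F)⁻¹| • μ.prod ν := by
    rw [← Measure.prod_smul_right, ← Measure.map_addHaar_smul ν hc, ← Measure.map_id (μ := μ),
      Measure.map_prod_map _ _ measurable_id (measurable_const_smul c), Measure.map_id]
    rfl
  calc ∫ p, f (p.1, c • p.2) ∂μ.prod ν = ∫ p, f p ∂(μ.prod ν).map e :=
        (e.measurableEmbedding.integral_map f).symm
    _ = _ := by rw [hmap, integral_smul_measure, ENNReal.toReal_ofReal (abs_nonneg _)]

-- `normSqMul = e^Ψ`, so the integrand of the theorem is `g e^{-Ψ}`.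
def normSqMul (p : ℂ × ℂ) : ℝ := Complex.normSq p.1 * Complex.normSq p.2

@[fun_prop]
theorem continuous_normSqMul : Continuous normSqMul := by
  unfold normSqMul; fun_prop

theorem normSqMul_smul_snd (p : ℂ × ℂ) (c : ℝ) :
    normSqMul (p.1, c • p.2) = c ^ 2 * normSqMul p := by
  simp only [normSqMul, Complex.real_smul, Complex.normSq_mul, Complex.normSq_ofReal]
  ring

theorem integral_comp_smul_snd_div_normSqMul (F : ℂ × ℂ → ℝ) {c : ℝ} (hc : c ≠ 0) :
    ∫ p, F (p.1, c • p.2) / normSqMul p = ∫ p, F p / normSqMul p := by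
  have hc2 : c ^ 2 ≠ 0 := pow_ne_zero 2 hc
  have hpt : ∀ p : ℂ × ℂ, F (p.1, c • p.2) / normSqMul p
      = c ^ 2 * (F (p.1, c • p.2) / normSqMul (p.1, c • p.2)) := fun p => by
    rw [normSqMul_smul_snd, ← div_div, ← mul_div_assoc, mul_div_cancel₀ _ hc2]
  rw [integral_congr_ae (ae_of_all _ hpt), integral_const_mul, Measure.volume_eq_prod,
    integral_comp_smul_snd _ _ (fun p => F p / normSqMul p) hc, Complex.finrank_real_complex,
    smul_eq_mul, ← mul_assoc, abs_inv, abs_of_pos (by positivity), mul_inv_cancel₀ hc2, one_mul]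

theorem setIntegral_preimage_Ioo_normSqMul_mul_sq (g : ℂ × ℂ → ℝ) {c : ℝ} (hc : c ≠ 0)
    (a b : ℝ) :
    ∫ p in normSqMul ⁻¹' Ioo (c ^ 2 * a) (c ^ 2 * b), g p / normSqMul p
      = ∫ p in normSqMul ⁻¹' Ioo a b, g (p.1, c • p.2) / normSqMul p := by
  have hmeas : ∀ a b : ℝ, MeasurableSet (normSqMul ⁻¹' Ioo a b) := fun a b =>
    measurableSet_Ioo.preimage continuous_normSqMul.measurable
  have hmem : ∀ p : ℂ × ℂ, (p.1, c • p.2) ∈ normSqMul ⁻¹' Ioo (c ^ 2 * a) (c ^ 2 * b)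
      ↔ p ∈ normSqMul ⁻¹' Ioo a b := fun p => by
    have hc2 : 0 < c ^ 2 := by positivity
    simp only [mem_preimage, mem_Ioo, normSqMul_smul_snd, mul_lt_mul_iff_right₀ hc2]
  have hind : ∀ s : Set (ℂ × ℂ), ∀ f : ℂ × ℂ → ℝ,
      s.indicator (fun p => f p / normSqMul p) = fun p => s.indicator f p / normSqMul p :=
    fun s f => by ext p; by_cases hp : p ∈ s <;> simp [hp]
  rw [← integral_indicator (hmeas _ _), ← integral_indicator (hmeas _ _), hind,
    ← integral_comp_smul_snd_div_normSqMul _ hc, hind]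
  congr 1 with p
  by_cases hp : p ∈ normSqMul ⁻¹' Ioo a b
  · simp only [indicator_of_mem hp, indicator_of_mem ((hmem p).2 hp)]
  · simp only [indicator_of_notMem hp, indicator_of_notMem (mt (hmem p).1 hp)]

theorem setIntegral_normSq_preimage_Ioo_inv {a b : ℝ} (ha : 0 < a) (hab : a ≤ b) :
    ∫ u in Complex.normSq ⁻¹' Ioo a b, (Complex.normSq u)⁻¹ = π * log (b / a) := by
  have hb : 0 < b := ha.trans_le hab
  have hradial : (Complex.normSq ⁻¹' Ioo a b).indicator (fun u => (Complex.normSq u)⁻¹)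
      = fun u => (Ioo √a √b).indicator (fun r => (r ^ 2)⁻¹) ‖u‖ := by
    ext u
    simp only [indicator, mem_preimage, mem_Ioo, Complex.norm_def,
      Real.sqrt_lt_sqrt_iff ha.le, Real.sqrt_lt_sqrt_iff (Complex.normSq_nonneg u),
      Real.sq_sqrt (Complex.normSq_nonneg u)]
  have hradius : ∫ r in Ioi (0 : ℝ), r ^ (2 - 1) • (Ioo √a √b).indicator (fun r => (r ^ 2)⁻¹) r
      = log (b / a) / 2 := by
    have hsa : 0 < √a := Real.sqrt_pos.2 ha
    have hpt : ∀ r, r ^ (2 - 1) • (Ioo √a √b).indicator (fun r => (r ^ 2)⁻¹) r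
        = (Ioo √a √b).indicator (fun r => r⁻¹) r := fun r => by
      by_cases hr : r ∈ Ioo √a √b
      · simp only [indicator_of_mem hr, smul_eq_mul, Nat.add_one_sub_one, pow_one]
        field_simp [(hsa.trans hr.1).ne']
      · simp only [indicator_of_notMem hr, smul_zero]
    rw [integral_congr_ae (ae_of_all _ hpt), setIntegral_indicator measurableSet_Ioo,
      inter_eq_right.2 (Ioo_subset_Ioi_self.trans (Ioi_subset_Ioi hsa.le)),
      ← integral_Ioc_eq_integral_Ioo, ← intervalIntegral.integral_of_le (Real.sqrt_le_sqrt hab),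
      integral_inv_of_pos hsa (Real.sqrt_pos.2 hb), ← Real.sqrt_div' _ ha.le,
      Real.log_sqrt (div_pos hb ha).le]
  rw [← integral_indicator (measurableSet_Ioo.preimage Complex.continuous_normSq.measurable),
    hradial, integral_fun_norm_addHaar, Complex.finrank_real_complex, measureReal_def,
    Complex.volume_ball, hradius]
  simp only [ENNReal.ofReal_one, one_pow, one_mul, ENNReal.coe_toReal, NNReal.coe_real_pi,
    smul_eq_mul, nsmul_eq_mul, Nat.cast_ofNat]
  ring

theorem setIntegral_preimage_Ioo_normSqMul_fst (f : ℂ → ℝ) {a b : ℝ} (ha : 0 < a) (hab : a ≤ b)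
    (hf : IntegrableOn (fun p => f p.1 / normSqMul p) (normSqMul ⁻¹' Ioo a b)) :
    ∫ p in normSqMul ⁻¹' Ioo a b, f p.1 / normSqMul p
      = π * log (b / a) * ∫ x, f x / Complex.normSq x := by
  have hmeas : MeasurableSet (normSqMul ⁻¹' Ioo a b) :=
    measurableSet_Ioo.preimage continuous_normSqMul.measurable
  have hslice : ∀ x : ℂ, ∫ u, (normSqMul ⁻¹' Ioo a b).indicator
      (fun p => f p.1 / normSqMul p) (x, u) = π * log (b / a) * (f x / Complex.normSq x) := by
    intro x
    rcases (Complex.normSq_nonneg x).eq_or_lt with hx | hx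
    · have hnot : ∀ u : ℂ, (x, u) ∉ normSqMul ⁻¹' Ioo a b := fun u hu => by
        simp only [mem_preimage, normSqMul, ← hx, zero_mul, mem_Ioo] at hu
        exact ha.not_gt hu.1
      simp [indicator_of_notMem (hnot _), ← hx]
    · have hmem : ∀ u : ℂ, (x, u) ∈ normSqMul ⁻¹' Ioo a b
          ↔ u ∈ Complex.normSq ⁻¹' Ioo (a / Complex.normSq x) (b / Complex.normSq x) :=
        fun u => by simp only [mem_preimage, mem_Ioo, normSqMul, div_lt_iff₀' hx, lt_div_iff₀' hx]
      have hpt : ∀ u : ℂ, (normSqMul ⁻¹' Ioo a b).indicator (fun p => f p.1 / normSqMul p) (x, u)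
          = f x / Complex.normSq x * (Complex.normSq ⁻¹' Ioo (a / Complex.normSq x)
              (b / Complex.normSq x)).indicator (fun u => (Complex.normSq u)⁻¹) u := fun u => by
        by_cases hu : (x, u) ∈ normSqMul ⁻¹' Ioo a b
        · rw [indicator_of_mem hu, indicator_of_mem ((hmem u).1 hu), normSqMul, ← div_div,
            div_eq_mul_inv]
        · rw [indicator_of_notMem hu, indicator_of_notMem (mt (hmem u).2 hu), mul_zero]
      rw [integral_congr_ae (ae_of_all _ hpt), integral_const_mul,
        integral_indicator (measurableSet_Ioo.preimage Complex.continuous_normSq.measurable),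
        setIntegral_normSq_preimage_Ioo_inv (div_pos ha hx) (div_le_div_of_nonneg_right hab hx.le),
        div_div_div_cancel_right₀ hx.ne', mul_comm]
  have hf' : Integrable ((normSqMul ⁻¹' Ioo a b).indicator (fun p => f p.1 / normSqMul p))
      ((volume : Measure ℂ).prod volume) := by
    rw [← Measure.volume_eq_prod]
    exact hf.integrable_indicator hmeas
  rw [← integral_indicator hmeas, Measure.volume_eq_prod, integral_prod _ hf',
    ← integral_const_mul]
  exact integral_congr_ae (ae_of_all _ hslice)

theorem isBounded_fst_preimage_inter_normSqMul_preimage_Iio {K : Set ℂ} (hK : IsCompact K)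
    (h0 : (0 : ℂ) ∉ K) (b : ℝ) :
    Bornology.IsBounded (Prod.fst ⁻¹' K ∩ normSqMul ⁻¹' Iio b) := by
  obtain ⟨C, hC⟩ := hK.exists_bound_of_continuousOn (f := fun x => (Complex.normSq x)⁻¹)
    (Complex.continuous_normSq.continuousOn.inv₀ fun x hx =>
      (Complex.normSq_pos.2 (ne_of_mem_of_not_mem hx h0)).ne')
  refine (hK.isBounded.prod (Metric.isBounded_closedBall (x := (0 : ℂ)) (r := √(C * b)))).subset
    fun p ⟨hpK, hpb⟩ => ⟨hpK, ?_⟩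
  have hx : Complex.normSq p.1 ≠ 0 := (Complex.normSq_pos.2 (ne_of_mem_of_not_mem hpK h0)).ne'
  have hinv : (Complex.normSq p.1)⁻¹ ≤ C := (Real.le_norm_self _).trans (hC p.1 hpK)
  have hy : Complex.normSq p.2 ≤ C * b := calc
    Complex.normSq p.2 = (Complex.normSq p.1)⁻¹ * normSqMul p := by
      rw [normSqMul, inv_mul_cancel_left₀ hx]
    _ ≤ C * b := mul_le_mul hinv (le_of_lt hpb) (mul_nonneg (Complex.normSq_nonneg _)
      (Complex.normSq_nonneg _)) ((norm_nonneg _).trans (hC p.1 hpK))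
  rw [mem_closedBall_zero_iff, Complex.norm_def]
  exact Real.sqrt_le_sqrt hy

section

variable {g : ℂ × ℂ → ℝ} {a b : ℝ}

theorem exists_integrableOn_bound_div_normSqMul (hg : Continuous g) (hsupp : HasCompactSupport g)
    (hdisj : Disjoint (tsupport g) {p : ℂ × ℂ | p.1 = 0}) (ha : 0 < a) :
    ∃ bound : ℂ × ℂ → ℝ, IntegrableOn bound (normSqMul ⁻¹' Ioo a b) ∧
      ∀ p ∈ normSqMul ⁻¹' Ioo a b, ∀ w : ℂ, ‖g (p.1, w) / normSqMul p‖ ≤ bound p := by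
  set K := Prod.fst '' tsupport g
  have hK : IsCompact K := hsupp.image continuous_fst
  have h0 : (0 : ℂ) ∉ K := fun ⟨q, hq, hq0⟩ => disjoint_left.1 hdisj hq hq0
  have hKmeas : MeasurableSet (Prod.fst ⁻¹' K : Set (ℂ × ℂ)) :=
    (hK.isClosed.preimage continuous_fst).measurableSet
  obtain ⟨M, hM⟩ := hsupp.exists_bound_of_continuous hg
  have hM0 : 0 ≤ M := (norm_nonneg _).trans (hM 0)
  refine ⟨(Prod.fst ⁻¹' K).indicator fun _ => M / a, ?_, fun p hp w => ?_⟩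
  · refine (integrable_indicator_iff hKmeas).2 (integrableOn_const ?_)
    rw [Measure.restrict_apply hKmeas]
    refine ((isBounded_fst_preimage_inter_normSqMul_preimage_Iio hK h0 b).subset ?_)
      |>.measure_lt_top.ne
    exact inter_subset_inter_right _ fun p hp => hp.2
  by_cases hgw : g (p.1, w) = 0
  · rw [hgw, zero_div, norm_zero]
    exact indicator_nonneg (fun _ _ => div_nonneg hM0 ha.le) p
  · have hpK : p ∈ Prod.fst ⁻¹' K := ⟨(p.1, w), subset_tsupport g hgw, rfl⟩
    rw [indicator_of_mem hpK, norm_div, Real.norm_of_nonneg (ha.trans hp.1).le]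
    exact div_le_div₀ hM0 (hM _) ha hp.1.le

theorem tendsto_setIntegral_comp_smul_snd_div_normSqMul (hg : Continuous g)
    (hsupp : HasCompactSupport g) (hdisj : Disjoint (tsupport g) {p : ℂ × ℂ | p.1 = 0})
    (ha : 0 < a) (hab : a ≤ b) :
    Tendsto (fun c : ℝ => ∫ p in normSqMul ⁻¹' Ioo a b, g (p.1, c • p.2) / normSqMul p) (𝓝 0)
      (𝓝 (π * log (b / a) * ∫ x, g (x, 0) / Complex.normSq x)) := by
  obtain ⟨bound, hbound_int, hbound⟩ := exists_integrableOn_bound_div_normSqMul hg hsupp hdisj ha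
    (b := b)
  have hband : MeasurableSet (normSqMul ⁻¹' Ioo a b) :=
    measurableSet_Ioo.preimage continuous_normSqMul.measurable
  have hmeas : ∀ c : ℝ, AEStronglyMeasurable (fun p : ℂ × ℂ => g (p.1, c • p.2) / normSqMul p)
      (volume.restrict (normSqMul ⁻¹' Ioo a b)) := fun c =>
    ((hg.comp (by fun_prop)).measurable.div continuous_normSqMul.measurable).aestronglyMeasurable
  have hlim : Tendsto (fun c : ℝ => ∫ p in normSqMul ⁻¹' Ioo a b, g (p.1, c • p.2) / normSqMul p)
      (𝓝 0) (𝓝 (∫ p in normSqMul ⁻¹' Ioo a b, g (p.1, (0 : ℝ) • p.2) / normSqMul p)) :=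
    tendsto_integral_filter_of_dominated_convergence bound (.of_forall hmeas)
      (.of_forall fun c => ae_restrict_of_forall_mem hband fun p hp => hbound p hp _) hbound_int
      (ae_of_all _ fun p => ((hg.comp (by fun_prop)).tendsto 0).div_const _)
  have hint : IntegrableOn (fun p : ℂ × ℂ => g (p.1, (0 : ℝ) • p.2) / normSqMul p)
      (normSqMul ⁻¹' Ioo a b) :=
    hbound_int.mono' (hmeas 0) (ae_restrict_of_forall_mem hband fun p hp => hbound p hp _)
  simp only [zero_smul] at hlim hint
  rwa [setIntegral_preimage_Ioo_normSqMul_fst (fun x => g (x, 0)) ha hab hint] at hlim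

end

/-- Density `π/|x|²` of the Ohsawa measure of `(ℂ², log|x|² + log|y|²)` on the x-axis
away from the origin: if the support of `g` avoids `{x = 0}`, the defining limit exists
and equals `π ∫_ℂ g(x,0)/|x|² dλ(x)`. -/
theorem stmt9 (g : ℂ × ℂ → ℝ) (hg : Continuous g) (hsupp : HasCompactSupport g)
    (hdisj : Disjoint (tsupport g) {p : ℂ × ℂ | p.1 = 0}) :
    Tendsto
      (fun t : ℝ =>
        ∫ p in {p : ℂ × ℂ |
            Real.exp t < Complex.normSq p.1 * Complex.normSq p.2 ∧
            Complex.normSq p.1 * Complex.normSq p.2 < Real.exp (t + 1)},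
          g p / (Complex.normSq p.1 * Complex.normSq p.2))
      atBot (𝓝 (Real.pi * ∫ x : ℂ, g (x, 0) / Complex.normSq x)) := by
  have hscale : Tendsto (fun t : ℝ => exp (t / 2)) atBot (𝓝 0) :=
    tendsto_exp_atBot.comp (tendsto_id.atBot_div_const two_pos)
  have hlim := (tendsto_setIntegral_comp_smul_snd_div_normSqMul hg hsupp hdisj one_pos
    (one_le_exp zero_le_one)).comp hscale
  rw [div_one, log_exp, mul_one] at hlim
  refine hlim.congr fun t => ?_
  have hsq : exp (t / 2) ^ 2 = exp t := by rw [← exp_nat_mul]; ring_nf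
  rw [Function.comp_apply, ← setIntegral_preimage_Ioo_normSqMul_mul_sq g (exp_pos _).ne', hsq,
    mul_one, ← exp_add]
  rfl
end

section
/- Let u : ℂ → ℝ be continuous and let Ψ(z) = log|z|² + u(z). For every continuous compactly supported g : ℂ → ℝ, the limit as t → -∞ of ∫_{t < Ψ(z) < t+1} g(z) e^{-Ψ(z)} dλ(z) exists and equals π · e^{-u(0)} · g(0). -/
/-!
Near the origin `u` stays within `δ` of `u 0`, so the part of the shell
`{t < log |z|² + u z < t + 1}` near `0` lies between the annuli
`t + δ - u 0 < log |z|² < t + 1 - δ - u 0` and `t - δ - u 0 < log |z|² < t + 1 + δ - u 0`,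
whose masses for `|z|⁻² dλ` are `π (1 ∓ 2δ)`. Since `u` is bounded on a ball containing the support
of `g`, the shell inside that ball shrinks to `0` as `t → -∞`. Hence `π⁻¹ |z|⁻² dλ` on the shells
is a family of peak functions at `0`, and integrating the continuous function `g e^{-u}` against it
gives `g 0 e^{-u 0}` in the limit.
-/

open MeasureTheory Filter Real Set Metric
open Complex (normSq)
open scoped Topology

namespace Ohsawa

/-- The annulus `a < log |z|² < b`. -/
def annulus (a b : ℝ) : Set ℂ := {z | exp a < normSq z ∧ normSq z < exp b}

/-- The shell `t < log |z|² + u z < t + 1`, written without logarithms. -/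
def shell (u : ℂ → ℝ) (t : ℝ) : Set ℂ :=
  {z | exp t < normSq z * exp (u z) ∧ normSq z * exp (u z) < exp (t + 1)}

variable {u : ℂ → ℝ} {s : Set ℂ} {m M : ℝ}

theorem measurableSet_annulus (a b : ℝ) : MeasurableSet (annulus a b) :=
  Complex.continuous_normSq.measurable measurableSet_Ioo

theorem measurableSet_shell (hu : Measurable u) (t : ℝ) :
    MeasurableSet (shell u t) :=
  (Complex.continuous_normSq.measurable.mul (measurable_exp.comp hu)) measurableSet_Ioo

theorem mem_annulus_iff_norm {a b : ℝ} {z : ℂ} :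
    z ∈ annulus a b ↔ ‖z‖ ∈ Ioo (exp (a / 2)) (exp (b / 2)) := by
  have hsq : ∀ c, exp c = exp (c / 2) ^ 2 := fun c => by rw [← exp_nat_mul]; ring_nf
  simp only [annulus, mem_ofPred_eq, mem_Ioo, Complex.normSq_eq_norm_sq, hsq a, hsq b,
    sq_lt_sq₀ (exp_pos _).le (norm_nonneg z), sq_lt_sq₀ (norm_nonneg z) (exp_pos _).le]

theorem annulus_subset_annulus {a b a' b' : ℝ} (ha : a' ≤ a) (hb : b ≤ b') :
    annulus a b ⊆ annulus a' b' := fun _ hz =>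
  ⟨(exp_le_exp.2 ha).trans_lt hz.1, hz.2.trans_le (exp_le_exp.2 hb)⟩

theorem annulus_subset_closedBall (a b : ℝ) : annulus a b ⊆ closedBall 0 (exp (b / 2)) :=
  fun _ hz => mem_closedBall_zero_iff.2 (mem_annulus_iff_norm.1 hz).2.le

theorem eventually_annulus_subset_closedBall (a b : ℝ) {ρ : ℝ} (hρ : 0 < ρ) :
    ∀ᶠ t in atBot, annulus (t + a) (t + b) ⊆ closedBall 0 ρ := by
  filter_upwards [eventually_le_atBot (2 * log ρ - b)] with t ht
  refine (annulus_subset_closedBall _ _).trans (closedBall_subset_closedBall ?_)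
  calc exp ((t + b) / 2) ≤ exp (log ρ) := exp_le_exp.2 (by linarith)
    _ = ρ := exp_log hρ

theorem mem_shell_iff {t : ℝ} {z : ℂ} :
    z ∈ shell u t ↔ z ∈ annulus (t - u z) (t + 1 - u z) := by
  simp only [shell, annulus, mem_ofPred_eq, exp_sub, div_lt_iff₀ (exp_pos _),
    lt_div_iff₀ (exp_pos _)]

theorem shell_inter_subset_annulus (hu : ∀ z ∈ s, m ≤ u z ∧ u z ≤ M) (t : ℝ) :
    shell u t ∩ s ⊆ annulus (t - M) (t + 1 - m) := fun z ⟨hz, hzs⟩ =>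
  annulus_subset_annulus (by linarith [(hu z hzs).2]) (by linarith [(hu z hzs).1])
    (mem_shell_iff.1 hz)

theorem annulus_inter_subset_shell (hu : ∀ z ∈ s, m ≤ u z ∧ u z ≤ M) (t : ℝ) :
    annulus (t - m) (t + 1 - M) ∩ s ⊆ shell u t := fun z ⟨hz, hzs⟩ =>
  mem_shell_iff.2 <| annulus_subset_annulus (by linarith [(hu z hzs).1])
    (by linarith [(hu z hzs).2]) hz

theorem integral_inv_normSq_annulus {a b : ℝ} (hab : a ≤ b) :
    ∫ z in annulus a b, (normSq z)⁻¹ = π * (b - a) := by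
  set F : ℝ → ℝ := (Ioo (exp (a / 2)) (exp (b / 2))).indicator fun r => (r ^ 2)⁻¹
  have hF : ∀ z : ℂ, (annulus a b).indicator (fun z => (normSq z)⁻¹) z = F ‖z‖ := fun z => by
    simp only [F, indicator, mem_annulus_iff_norm, Complex.normSq_eq_norm_sq]
    congr
  have hradial : ∫ r in Ioi (0 : ℝ), r ^ (2 - 1) • F r = (b - a) / 2 := by
    have hIoo : Ioo (exp (a / 2)) (exp (b / 2)) ⊆ Ioi 0 := fun r hr => (exp_pos _).trans hr.1
    rw [setIntegral_congr_fun measurableSet_Ioi (g := (Ioo (exp (a / 2)) (exp (b / 2))).indicator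
        fun r => r⁻¹) fun r (hr : 0 < r) => by
          by_cases h : r ∈ Ioo (exp (a / 2)) (exp (b / 2))
          · simp [F, h]; field_simp
          · simp [F, h],
      setIntegral_indicator measurableSet_Ioo, inter_eq_self_of_subset_right hIoo,
      ← integral_Ioc_eq_integral_Ioo,
      ← intervalIntegral.integral_of_le (exp_le_exp.2 (by linarith)),
      integral_inv_of_pos (exp_pos _) (exp_pos _), ← exp_sub, log_exp]
    ring
  rw [← integral_indicator (measurableSet_annulus a b), funext hF,
    integral_fun_norm_addHaar volume F, Complex.finrank_real_complex, hradial]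
  simp [Measure.real, Complex.volume_ball]
  ring

theorem integrableOn_inv_normSq_annulus (a b : ℝ) :
    IntegrableOn (fun z => (normSq z)⁻¹) (annulus a b) := by
  refine Measure.integrableOn_of_bounded (M := exp (-a))
    ((measure_mono (annulus_subset_closedBall a b)).trans_lt measure_closedBall_lt_top).ne
    Complex.continuous_normSq.measurable.inv.aestronglyMeasurable
    ((ae_restrict_iff' (measurableSet_annulus a b)).2 (ae_of_all _ fun z hz => ?_))
  rw [norm_inv, Real.norm_of_nonneg (Complex.normSq_nonneg z), exp_neg]
  exact inv_anti₀ (exp_pos a) hz.1.le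

theorem integral_inv_normSq_le_of_subset_annulus {S : Set ℂ} {a b : ℝ} (hab : a ≤ b)
    (hS : S ⊆ annulus a b) : ∫ z in S, (normSq z)⁻¹ ≤ π * (b - a) :=
  integral_inv_normSq_annulus hab ▸ setIntegral_mono_set (integrableOn_inv_normSq_annulus a b)
    (ae_of_all _ fun z => inv_nonneg.2 (Complex.normSq_nonneg z)) hS.eventuallyLE

theorem le_integral_inv_normSq_of_annulus_subset {S : Set ℂ} {a b : ℝ} (hab : a ≤ b)
    (hS : annulus a b ⊆ S) (hint : IntegrableOn (fun z => (normSq z)⁻¹) S) :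
    π * (b - a) ≤ ∫ z in S, (normSq z)⁻¹ :=
  integral_inv_normSq_annulus hab ▸ setIntegral_mono_set hint
    (ae_of_all _ fun z => inv_nonneg.2 (Complex.normSq_nonneg z)) hS.eventuallyLE

theorem eventually_shell_inter_closedBall_subset {R ρ : ℝ} (hu : ContinuousOn u (closedBall 0 R))
    (hρ : 0 < ρ) : ∀ᶠ t in atBot, shell u t ∩ closedBall 0 R ⊆ closedBall 0 ρ := by
  obtain ⟨C, hC⟩ := (isCompact_closedBall (0 : ℂ) R).exists_bound_of_continuousOn hu
  have hbound : ∀ z ∈ closedBall 0 R, -C ≤ u z ∧ u z ≤ C := fun z hz => abs_le.1 (hC z hz)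
  filter_upwards [eventually_annulus_subset_closedBall (-C) (1 + C) hρ] with t ht
  exact (shell_inter_subset_annulus hbound t).trans
    ((annulus_subset_annulus (by linarith) (by linarith)).trans ht)

theorem tendsto_integral_inv_normSq_shell_inter_closedBall (hu : Continuous u) {R : ℝ}
    (hR : 0 < R) :
    Tendsto (fun t => ∫ z in shell u t ∩ closedBall 0 R, (normSq z)⁻¹) atBot (𝓝 π) := by
  refine Metric.tendsto_nhds.2 fun ε hε => ?_
  set δ := min (1 / 4) (ε / (4 * π))
  have hδ : 0 < δ := lt_min (by norm_num) (by positivity)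
  obtain ⟨ρ', hρ', hρ'u⟩ := Metric.nhds_basis_closedBall.mem_iff.1
    (Metric.closedBall_mem_nhds (u 0) hδ |> hu.continuousAt.preimage_mem_nhds)
  set ρ := min ρ' R
  have hρ : 0 < ρ := lt_min hρ' hR
  have hbound : ∀ z ∈ closedBall 0 ρ, u 0 - δ ≤ u z ∧ u z ≤ u 0 + δ := fun z hz => by
    have hdist := abs_le.1 <| mem_closedBall.1 <|
      hρ'u (closedBall_subset_closedBall (min_le_left _ _) hz)
    constructor <;> linarith [hdist.1, hdist.2]
  filter_upwards [eventually_shell_inter_closedBall_subset hu.continuousOn hρ,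
    eventually_annulus_subset_closedBall (δ - u 0) (1 - δ - u 0) hρ] with t hshell hann
  have hR_eq : shell u t ∩ closedBall 0 R = shell u t ∩ closedBall 0 ρ :=
    (subset_inter inter_subset_left hshell).antisymm
      (inter_subset_inter_right _ (closedBall_subset_closedBall (min_le_right _ _)))
  have hupper := shell_inter_subset_annulus hbound t
  have hlower : annulus (t - (u 0 - δ)) (t + 1 - (u 0 + δ)) ⊆ shell u t ∩ closedBall 0 ρ :=
    fun z hz => by
      have hzρ : z ∈ closedBall 0 ρ := hann (by convert hz using 2 <;> ring)
      exact ⟨annulus_inter_subset_shell hbound t ⟨hz, hzρ⟩, hzρ⟩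
  have hle := integral_inv_normSq_le_of_subset_annulus (by linarith) hupper
  have hδ4 : δ ≤ 1 / 4 := min_le_left _ _
  have hge := le_integral_inv_normSq_of_annulus_subset (by linarith)
    hlower ((integrableOn_inv_normSq_annulus _ _).mono_set hupper)
  have hδε : 2 * π * δ < ε :=
    calc 2 * π * δ ≤ 2 * π * (ε / (4 * π)) := by gcongr; exact min_le_right _ _
      _ < ε := by field_simp; linarith
  rw [Real.dist_eq, hR_eq, abs_lt]
  constructor <;> nlinarith [pi_pos]

theorem tendsto_integral_shell_div_normSq (hu : Continuous u) {f : ℂ → ℝ} (hf : Continuous f)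
    (hsupp : HasCompactSupport f) :
    Tendsto (fun t => ∫ z in shell u t, f z / normSq z) atBot (𝓝 (π * f 0)) := by
  obtain ⟨R₀, hR₀⟩ := hsupp.isBounded.subset_closedBall 0
  set R := max R₀ 1
  have hR : 0 < R := lt_max_of_lt_right one_pos
  have hfR : tsupport f ⊆ closedBall 0 R :=
    hR₀.trans (closedBall_subset_closedBall (le_max_left _ _))
  have hshell : ∀ t, MeasurableSet (shell u t ∩ closedBall 0 R) := fun t =>
    (measurableSet_shell hu.measurable t).inter measurableSet_closedBall
  set φ : ℝ → ℂ → ℝ := fun t => (shell u t ∩ closedBall 0 R).indicator fun z => (π * normSq z)⁻¹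
  have hvanish : ∀ U : Set ℂ, IsOpen U → 0 ∈ U → TendstoUniformlyOn φ 0 atBot Uᶜ := by
    intro U hU h0U
    obtain ⟨ρ, hρ, hρU⟩ := Metric.nhds_basis_closedBall.mem_iff.1 (hU.mem_nhds h0U)
    refine Metric.tendstoUniformlyOn_iff.2 fun ε hε => ?_
    filter_upwards [eventually_shell_inter_closedBall_subset (R := R) hu.continuousOn hρ]
      with t ht z hz
    simpa [φ, indicator_of_notMem fun hz' => hz (hρU (ht hz'))] using hε
  have hmass : Tendsto (fun t => ∫ z in closedBall 0 R, φ t z) atBot (𝓝 1) := by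
    have hlim := (tendsto_integral_inv_normSq_shell_inter_closedBall hu hR).const_mul π⁻¹
    rw [inv_mul_cancel₀ pi_ne_zero] at hlim
    refine hlim.congr fun t => ?_
    rw [setIntegral_indicator (hshell t), inter_eq_right.2 inter_subset_right,
      ← integral_const_mul]
    simp only [mul_inv]
  have hpeak : Tendsto (fun t => ∫ z, φ t z • f z) atBot (𝓝 (f 0)) :=
    tendsto_integral_peak_smul_of_integrable_of_tendsto measurableSet_closedBall
      (closedBall_mem_nhds 0 hR) measure_closedBall_lt_top.ne
      (Eventually.of_forall fun t => indicator_nonneg fun z _ =>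
        inv_nonneg.2 (mul_nonneg pi_pos.le (Complex.normSq_nonneg z))) hvanish hmass
      (Eventually.of_forall fun t => ((measurable_const.mul
        Complex.continuous_normSq.measurable).inv.indicator (hshell t)).aestronglyMeasurable)
      (hf.integrable_of_hasCompactSupport hsupp) hf.continuousAt
  refine (hpeak.const_mul π).congr fun t => ?_
  have hvanish_off : ∀ z ∈ shell u t \ (shell u t ∩ closedBall 0 R), f z / normSq z = 0 :=
    fun z hz => by
      rw [image_eq_zero_of_notMem_tsupport fun h => hz.2 ⟨hz.1, hfR h⟩, zero_div]
  rw [setIntegral_eq_of_subset_of_forall_sdiff_eq_zero (measurableSet_shell hu.measurable t)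
    inter_subset_left hvanish_off, ← integral_indicator (hshell t), ← integral_const_mul]
  congr 1 with z
  by_cases hz : z ∈ shell u t ∩ closedBall 0 R
  · simp only [φ, smul_eq_mul, indicator_of_mem hz]
    field_simp
  · simp [φ, indicator_of_notMem hz]

end Ohsawa

/-- The Ohsawa measure of `(ℂ, log|z|² + u)` at the origin is `π e^{-u(0)} δ₀`:
the defining limit exists and equals `π · e^{-u 0} · g 0`.  (For `z ≠ 0`,
`t < log|z|² + u z < t + 1` is equivalent to `e^t < |z|² e^{u z} < e^{t+1}`.) -/
theorem stmt10 (u : ℂ → ℝ) (hu : Continuous u) (g : ℂ → ℝ) (hg : Continuous g)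
    (hsupp : HasCompactSupport g) :
    Tendsto
      (fun t : ℝ =>
        ∫ z in {z : ℂ |
            Real.exp t < Complex.normSq z * Real.exp (u z) ∧
            Complex.normSq z * Real.exp (u z) < Real.exp (t + 1)},
          g z * Real.exp (-(u z)) / Complex.normSq z)
      atBot (𝓝 (Real.pi * Real.exp (-(u 0)) * g 0)) := by
  rw [mul_assoc, mul_comm (Real.exp _)]
  exact Ohsawa.tendsto_integral_shell_div_normSq (f := fun z => g z * Real.exp (-(u z))) hu
    (hg.mul hu.neg.rexp) hsupp.mul_right
end
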